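/- arXiv:2412.18400 — 2 statements merged into one kernel-verified Lean document; each statement's English description precedes it below -/
import Mathlib

section
/- For every n ≥ 2, every weight W, and all π, φ ∈ S_n, one has d_W(π,φ) ≤ 1. Moreover, if w_{i,j} > 0 for all 1 ≤ i < j ≤ n (so that d_W is a metric), then d_W(π,φ) = 1 if and only if φ = π̂, the ordinal inverse of π. -/
open Finset

/-- The set of index pairs `(i,j)` with `i < j`. -/
def pairs (n : ℕ) : Finset (Fin n × Fin n) :=
  Finset.univ.filter (fun p => p.1 < p.2)

/-- The discordance set of two permutations: all pairs `i < j` with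
`(π_j - π_i)(φ_j - φ_i) < 0`. -/
def dsc (n : ℕ) (π φ : Equiv.Perm (Fin n)) : Finset (Fin n × Fin n) :=
  (pairs n).filter (fun p =>
    ((π p.2 : ℤ) - (π p.1 : ℤ)) * ((φ p.2 : ℤ) - (φ p.1 : ℤ)) < 0)

/-- `W` is a weight: a strictly upper triangular matrix of nonnegative reals
with positive total sum. -/
def IsWeight (n : ℕ) (W : Fin n → Fin n → ℝ) : Prop :=
  (∀ i j : Fin n, ¬ i < j → W i j = 0) ∧ (∀ i j : Fin n, 0 ≤ W i j) ∧
    0 < ∑ p ∈ pairs n, W p.1 p.2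

/-- The weighted Kendall tau distance. -/
noncomputable def dW (n : ℕ) (W : Fin n → Fin n → ℝ) (π φ : Equiv.Perm (Fin n)) : ℝ :=
  (∑ p ∈ dsc n π φ, W p.1 p.2) / (∑ p ∈ pairs n, W p.1 p.2)

/-- The ordinal inverse `π̂ = (n+1-π_1, …, n+1-π_n)` (in 0-indexed form,
`π̂ i = (n-1) - π i`). -/
def ordInv (n : ℕ) (π : Equiv.Perm (Fin n)) : Equiv.Perm (Fin n) :=
  π.trans Fin.revPerm

/-!
The discordant pairs form a subset of all pairs `i < j`, so with nonnegative weights `d_W ≤ 1`,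
and with positive weights `d_W = 1` exactly when every pair is discordant. That says `φ ∘ π⁻¹` is
strictly antitone, and the only strictly antitone self-map of `Fin n` is `Fin.rev`.
-/

theorem Finset.sum_eq_sum_iff_of_subset {ι M : Type*} [AddCommMonoid M] [PartialOrder M]
    [IsOrderedCancelAddMonoid M] {s t : Finset ι} {f : ι → M} (h : s ⊆ t)
    (hf : ∀ i ∈ t, 0 < f i) : ∑ i ∈ s, f i = ∑ i ∈ t, f i ↔ s = t := by
  refine ⟨fun hsum => ?_, fun hst => hst ▸ rfl⟩
  by_contra hne
  obtain ⟨i, hit, his⟩ := exists_of_ssubset (h.ssubset_of_ne hne)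
  exact (sum_lt_sum_of_subset h hit his (hf i hit) fun j hj _ => (hf j hj).le).ne hsum

theorem Fin.strictAnti_iff_eq_rev {n : ℕ} {f : Fin n → Fin n} : StrictAnti f ↔ f = Fin.rev := by
  refine ⟨fun hf => ?_, fun hf => hf ▸ Fin.rev_strictAnti⟩
  have hid : Fin.rev ∘ f = id := (Fin.rev_strictAnti.comp hf).eq_id
  funext x
  simpa using congrArg Fin.rev (congrFun hid x)

theorem mem_pairs {n : ℕ} {p : Fin n × Fin n} : p ∈ pairs n ↔ p.1 < p.2 := by
  simp [pairs]

theorem dsc_subset_pairs (n : ℕ) (π φ : Equiv.Perm (Fin n)) : dsc n π φ ⊆ pairs n :=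
  filter_subset _ _

theorem mem_dsc_iff {n : ℕ} {π φ : Equiv.Perm (Fin n)} {p : Fin n × Fin n} :
    p ∈ dsc n π φ ↔ p.1 < p.2 ∧ (π p.1 < π p.2 ↔ φ p.2 < φ p.1) := by
  simp only [dsc, mem_filter, mem_pairs, and_congr_right_iff]
  intro hp
  have hπ : π p.1 ≠ π p.2 := π.injective.ne hp.ne
  have hφ : φ p.1 ≠ φ p.2 := φ.injective.ne hp.ne
  rw [Fin.lt_def, Fin.lt_def, mul_neg_iff]
  omega

theorem dsc_eq_pairs_iff_strictAnti {n : ℕ} {π φ : Equiv.Perm (Fin n)} :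
    dsc n π φ = pairs n ↔ StrictAnti (φ ∘ π.symm) := by
  have hall : dsc n π φ = pairs n ↔ ∀ i j, i < j → (π i < π j ↔ φ j < φ i) := by
    rw [Subset.antisymm_iff, and_iff_right (dsc_subset_pairs n π φ)]
    simp +contextual [subset_iff, mem_dsc_iff, mem_pairs]
  have hanti : StrictAnti (φ ∘ π.symm) ↔ ∀ i j, π i < π j → φ j < φ i :=
    ⟨fun h i j hij => by simpa using h hij,
      fun h a b hab => by simpa using h _ _ (by simpa using hab)⟩
  rw [hall, hanti]
  constructor
  · intro h i j hij
    rcases lt_trichotomy i j with hlt | rfl | hgt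
    · exact (h i j hlt).1 hij
    · exact absurd hij (lt_irrefl _)
    · exact lt_of_le_of_ne (not_lt.1 fun h' => hij.asymm ((h j i hgt).2 h'))
        (φ.injective.ne hgt.ne)
  · intro h i j hij
    exact ⟨h i j, fun hφ => (lt_or_gt_of_ne (π.injective.ne hij.ne)).resolve_right
      fun h' => (h j i h').asymm hφ⟩

theorem dsc_eq_pairs_iff {n : ℕ} {π φ : Equiv.Perm (Fin n)} :
    dsc n π φ = pairs n ↔ φ = ordInv n π := by
  rw [dsc_eq_pairs_iff_strictAnti, Fin.strictAnti_iff_eq_rev]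
  simp only [funext_iff, Equiv.ext_iff, ordInv, Function.comp_apply, Equiv.trans_apply,
    Fin.revPerm_apply]
  exact ⟨fun h x => by simpa using h (π x), fun h x => by simpa using h (π.symm x)⟩

theorem dW_le_one_and_eq_one_iff_general (n : ℕ) (W : Fin n → Fin n → ℝ)
    (hW : IsWeight n W) (π φ : Equiv.Perm (Fin n)) :
    dW n W π φ ≤ 1 ∧
    ((∀ i j : Fin n, i < j → 0 < W i j) → (dW n W π φ = 1 ↔ φ = ordInv n π)) := by
  obtain ⟨-, hW_nonneg, hW_total⟩ := hW
  have hsub := dsc_subset_pairs n π φ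
  refine ⟨div_le_one_of_le₀ (sum_le_sum_of_subset_of_nonneg hsub fun _ _ _ => hW_nonneg _ _)
    hW_total.le, fun hW_pos => ?_⟩
  rw [dW, div_eq_one_iff_eq hW_total.ne',
    sum_eq_sum_iff_of_subset hsub fun p hp => hW_pos _ _ (mem_pairs.1 hp), dsc_eq_pairs_iff]

/-- For every `n ≥ 2`, every weight `W` and all `π, φ ∈ S_n`:
`d_W(π,φ) ≤ 1`; moreover if all weights `w_{i,j}`, `i < j`, are positive
(so that `d_W` is a metric), then `d_W(π,φ) = 1` iff `φ = π̂`. -/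
theorem dW_le_one_and_eq_one_iff (n : ℕ) (hn : 2 ≤ n) (W : Fin n → Fin n → ℝ)
    (hW : IsWeight n W) (π φ : Equiv.Perm (Fin n)) :
    dW n W π φ ≤ 1 ∧
    ((∀ i j : Fin n, i < j → 0 < W i j) → (dW n W π φ = 1 ↔ φ = ordInv n π)) :=
  dW_le_one_and_eq_one_iff_general n W hW π φ
end

section
/- Let π ≠ φ be vertices of G_n and let P: π = ψ_1, ψ_2, …, ψ_m = φ be a path in G_n (consecutive vertices adjacent, all vertices distinct), and for each k let (i_k,j_k) be the unique element of dsc(ψ_k,ψ_{k+1}). Then P is a shortest path between π and φ (i.e., m − 1 = d_{G_n}(π,φ)) if and only if the pairs (i_1,j_1), …, (i_{m−1},j_{m−1}) are pairwise distinct. -/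
/-!
Discordance sets compose by symmetric difference, `dsc π φ = dsc π ρ ∆ dsc ρ φ`, so each edge of
`G_n` changes `dsc π ·` by exactly one pair and `d(π, φ) ≥ |dsc π φ|`. Conversely, if `π ≠ φ` then
`φ π⁻¹` has a descent at two consecutive values `a ⋖ b`, and swapping `a` and `b` in `π` removes
one discordant pair, so `d(π, φ) = |dsc π φ|`. Along the path, `dsc π ψ_k` is the iterated
symmetric difference of the singletons of the first `k` labels, which has `k` elements exactly
when these labels are distinct.
-/

open Finset

lemma dsc_comm (n : ℕ) (π φ : Equiv.Perm (Fin n)) : dsc n π φ = dsc n φ π := by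
  ext p
  simp only [dsc, Finset.mem_filter]
  rw [mul_comm]

/-- The edge graph of the permutohedron of order `n`: two permutations are
adjacent iff their discordance set is a singleton. -/
def Gn (n : ℕ) : SimpleGraph (Equiv.Perm (Fin n)) where
  Adj π φ := (dsc n π φ).card = 1
  symm := by
    constructor
    intro π φ h
    rwa [dsc_comm]
  loopless := by
    constructor
    intro π h
    have he : dsc n π π = ∅ := by
      ext p
      simp only [dsc, Finset.mem_filter, Finset.notMem_empty, iff_false, not_and]
      intro _
      exact not_lt.mpr (mul_self_nonneg _)
    rw [he] at h
    simp at h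

open Equiv

section CovBySwap

variable {α : Type*} [LinearOrder α]

lemma Equiv.swap_lt_swap_iff_of_covBy {a b u v : α} (hab : a ⋖ b)
    (h : ¬(u = a ∧ v = b)) (h' : ¬(u = b ∧ v = a)) :
    swap a b u < swap a b v ↔ u < v := by
  have below : ∀ c, c ≠ a → (c < b ↔ c < a) := fun c hc =>
    ⟨fun hcb => (hab.le_of_lt hcb).lt_of_ne hc, fun hca => hca.trans hab.lt⟩
  have above : ∀ c, c ≠ b → (a < c ↔ b < c) := fun c hc =>
    ⟨fun hac => (hab.ge_of_gt hac).lt_of_ne hc.symm, fun hbc => hab.lt.trans hbc⟩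
  by_cases hua : u = a <;> by_cases hub : u = b <;> by_cases hva : v = a <;>
    by_cases hvb : v = b <;> simp_all [swap_apply_of_ne_of_ne, hab.lt.ne, hab.lt.ne']

lemma Equiv.Perm.exists_covBy_apply_lt [LocallyFiniteOrder α] [Finite α] {σ : Perm α}
    (hσ : σ ≠ 1) : ∃ a b, a ⋖ b ∧ σ b < σ a := by
  by_contra! h
  have hmono : StrictMono σ := (strictMono_iff_forall_covBy σ).2 fun a b hab =>
    (h a b hab).lt_of_ne (σ.injective.ne hab.ne)
  exact hσ (Equiv.ext fun _ => hmono.apply_eq)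

end CovBySwap

open scoped symmDiff

section Discordance

variable {n : ℕ}

lemma mem_dsc {π φ : Perm (Fin n)} {p : Fin n × Fin n} :
    p ∈ dsc n π φ ↔ p.1 < p.2 ∧ ¬(π p.1 < π p.2 ↔ φ p.1 < φ p.2) := by
  simp only [dsc, pairs, mem_filter, mem_univ, true_and, and_congr_right_iff]
  intro hp
  have hπ : π p.1 ≠ π p.2 := π.injective.ne hp.ne
  have hφ : φ p.1 ≠ φ p.2 := φ.injective.ne hp.ne
  rw [Fin.lt_def, Fin.lt_def, mul_neg_iff]
  rw [Ne, Fin.ext_iff] at hπ hφ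
  omega

lemma min_max_mem_dsc {π φ : Perm (Fin n)} {i j : Fin n} (hij : i ≠ j) :
    (min i j, max i j) ∈ dsc n π φ ↔ ¬(π i < π j ↔ φ i < φ j) := by
  have hπ : π i ≠ π j := π.injective.ne hij
  have hφ : φ i ≠ φ j := φ.injective.ne hij
  rcases hij.lt_or_gt with h | h
  · simp [mem_dsc, h, h.le]
  · simp only [mem_dsc, min_eq_right h.le, max_eq_left h.le, h, true_and]
    rw [Ne, Fin.ext_iff] at hπ hφ
    simp only [Fin.lt_def]
    omega

lemma dsc_self (π : Perm (Fin n)) : dsc n π π = ∅ := by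
  ext p
  simp [mem_dsc]

lemma dsc_eq_symmDiff (π ρ φ : Perm (Fin n)) : dsc n π φ = dsc n π ρ ∆ dsc n ρ φ := by
  ext p
  simp only [mem_symmDiff, mem_dsc]
  tauto

end Discordance

section Distance

variable {n : ℕ}

lemma exists_adj_dsc_subset {π φ : Perm (Fin n)} (hne : π ≠ φ) :
    ∃ ψ, (Gn n).Adj π ψ ∧ dsc n π ψ ⊆ dsc n π φ := by
  obtain ⟨a, b, hab, hdesc⟩ := (φ * π⁻¹).exists_covBy_apply_lt (mul_inv_eq_one.not.2 hne.symm)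
  set i := π.symm a
  set j := π.symm b
  have hφ : φ j < φ i := hdesc
  have hπi : π i = a := π.apply_symm_apply a
  have hπj : π j = b := π.apply_symm_apply b
  have hij : i ≠ j := fun h => hab.lt.ne (by rw [← hπi, ← hπj, h])
  have hsingle : dsc n π (swap a b * π) = {(min i j, max i j)} := by
    refine eq_singleton_iff_unique_mem.2 ⟨?_, fun p hp => ?_⟩
    · simp [min_max_mem_dsc hij, hπi, hπj, hab.lt, hab.lt.not_gt]
    · obtain ⟨p₁, p₂⟩ := p
      obtain ⟨hp, hdisc⟩ := mem_dsc.1 hp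
      have : (π p₁ = a ∧ π p₂ = b) ∨ (π p₁ = b ∧ π p₂ = a) := by
        by_contra! h
        exact hdisc (swap_lt_swap_iff_of_covBy hab (not_and.2 h.1) (not_and.2 h.2)).symm
      simp only [← hπi, ← hπj, π.injective.eq_iff] at this
      rcases this with ⟨rfl, rfl⟩ | ⟨rfl, rfl⟩
      · simp [hp.le]
      · simp [hp.le]
  refine ⟨swap a b * π, by simp [Gn, hsingle], ?_⟩
  rw [hsingle, singleton_subset_iff, min_max_mem_dsc hij, hπi, hπj]
  simp [hab.lt, hφ.not_gt]

lemma card_dsc_le_length {π φ : Perm (Fin n)} (w : (Gn n).Walk π φ) :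
    #(dsc n π φ) ≤ w.length := by
  induction w with
  | nil => simp [dsc_self]
  | @cons u v w huv _ ih =>
    calc #(dsc n u w) ≤ #(dsc n u v ∪ dsc n v w) := by
          rw [dsc_eq_symmDiff u v w]; exact card_le_card symmDiff_subset_union
      _ ≤ #(dsc n u v) + #(dsc n v w) := card_union_le _ _
      _ ≤ _ := by rw [SimpleGraph.Walk.length_cons, show #(dsc n u v) = 1 from huv]; omega

lemma exists_walk_length_eq_card_dsc (π φ : Perm (Fin n)) :
    ∃ w : (Gn n).Walk π φ, w.length = #(dsc n π φ) := by
  induction hk : #(dsc n π φ) generalizing π with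
  | zero =>
    obtain rfl : π = φ := by
      by_contra hne
      obtain ⟨ψ, hadj, hsub⟩ := exists_adj_dsc_subset hne
      have := card_le_card hsub
      rw [show #(dsc n π ψ) = 1 from hadj] at this
      omega
    exact ⟨.nil, rfl⟩
  | succ k ih =>
    obtain ⟨ψ, hadj, hsub⟩ := exists_adj_dsc_subset (π := π) (φ := φ) fun h => by
      simp [h, dsc_self] at hk
    have hcard : #(dsc n ψ φ) = k := by
      rw [dsc_eq_symmDiff ψ π φ, dsc_comm, symmDiff_of_le hsub, card_sdiff_of_subset hsub, hk,
        show #(dsc n π ψ) = 1 from hadj, Nat.add_sub_cancel]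
    obtain ⟨w, hw⟩ := ih ψ hcard
    exact ⟨.cons hadj w, by simp [hw]⟩

lemma dist_Gn_eq_card_dsc (π φ : Perm (Fin n)) : (Gn n).dist π φ = #(dsc n π φ) := by
  obtain ⟨w, hw⟩ := exists_walk_length_eq_card_dsc π φ
  obtain ⟨w', hw'⟩ := SimpleGraph.Reachable.exists_walk_length_eq_dist ⟨w⟩
  exact le_antisymm (hw ▸ SimpleGraph.dist_le w) (hw' ▸ card_dsc_le_length w')

end Distance

section SymmDiffSteps

variable {α : Type*} [DecidableEq α] {s : ℕ → Finset α} {x : ℕ → α} {m : ℕ}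

lemma subset_image_range_of_symmDiff_singleton (h0 : s 0 = ∅)
    (hstep : ∀ k < m, s (k + 1) = s k ∆ {x k}) : ∀ k ≤ m, s k ⊆ (range k).image x := by
  intro k hk
  induction k with
  | zero => simp [h0]
  | succ k ih =>
    rw [hstep k hk, range_add_one, image_insert]
    exact symmDiff_subset_union.trans <| union_subset ((ih (by omega)).trans (subset_insert _ _))
      (singleton_subset_iff.2 (mem_insert_self _ _))

lemma eq_image_range_of_symmDiff_singleton (h0 : s 0 = ∅)
    (hstep : ∀ k < m, s (k + 1) = s k ∆ {x k}) (hx : Set.InjOn x (range m)) :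
    ∀ k ≤ m, s k = (range k).image x := by
  intro k hk
  induction k with
  | zero => simp [h0]
  | succ k ih =>
    have hnew : x k ∉ (range k).image x := fun h => by
      obtain ⟨l, hl, hlk⟩ := mem_image.1 h
      rw [mem_range] at hl
      exact hl.ne (hx (by simp; omega) (by simp; omega) hlk)
    rw [hstep k hk, ih (by omega), symmDiff_eq_union (disjoint_singleton_right.2 hnew),
      range_add_one, image_insert, insert_eq, union_comm]

lemma card_eq_iff_injOn_of_symmDiff_singleton (h0 : s 0 = ∅)
    (hstep : ∀ k < m, s (k + 1) = s k ∆ {x k}) : #(s m) = m ↔ Set.InjOn x (range m) := by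
  refine ⟨fun hcard => ?_, fun hx => ?_⟩
  · rw [← card_image_iff, card_range]
    refine le_antisymm (card_image_le.trans (card_range m).le) ?_
    calc m = #(s m) := hcard.symm
      _ ≤ _ := card_le_card (subset_image_range_of_symmDiff_singleton h0 hstep m le_rfl)
  · rw [eq_image_range_of_symmDiff_singleton h0 hstep hx m le_rfl, card_image_of_injOn hx,
      card_range]

end SymmDiffSteps

theorem shortest_path_iff_distinct_labels_general (n m : ℕ)
    (π φ : Equiv.Perm (Fin n))
    (ψ : ℕ → Equiv.Perm (Fin n)) (lab : ℕ → Fin n × Fin n)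
    (h0 : ψ 0 = π) (hlast : ψ m = φ)
    (hlab : ∀ k < m, dsc n (ψ k) (ψ (k + 1)) = {lab k}) :
    m = (Gn n).dist π φ ↔ (∀ k < m, ∀ l < m, lab k = lab l → k = l) := by
  have hstep : ∀ k < m, dsc n π (ψ (k + 1)) = dsc n π (ψ k) ∆ {lab k} := fun k hk => by
    rw [dsc_eq_symmDiff π (ψ k), hlab k hk]
  have hcard := card_eq_iff_injOn_of_symmDiff_singleton (s := fun k => dsc n π (ψ k))
    (by simp [h0, dsc_self]) hstep
  rw [dist_Gn_eq_card_dsc, ← hlast, eq_comm, hcard]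
  simp [Set.InjOn]

/-- Let `π ≠ φ` be vertices of `G_n` and let `π = ψ 0, ψ 1, …, ψ m = φ` be a
path in `G_n` (consecutive vertices adjacent, all vertices distinct), with
`lab k` the unique element of `dsc(ψ k, ψ (k+1))`. Then the path is a
shortest path, i.e. `m = d_{G_n}(π,φ)`, iff the labels
`lab 0, …, lab (m-1)` are pairwise distinct. -/
theorem shortest_path_iff_distinct_labels (n m : ℕ) (hm : 1 ≤ m)
    (π φ : Equiv.Perm (Fin n)) (hne : π ≠ φ)
    (ψ : ℕ → Equiv.Perm (Fin n)) (lab : ℕ → Fin n × Fin n)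
    (h0 : ψ 0 = π) (hlast : ψ m = φ)
    (hadj : ∀ k < m, (Gn n).Adj (ψ k) (ψ (k + 1)))
    (hinj : ∀ k ≤ m, ∀ l ≤ m, ψ k = ψ l → k = l)
    (hlab : ∀ k < m, dsc n (ψ k) (ψ (k + 1)) = {lab k}) :
    m = (Gn n).dist π φ ↔ (∀ k < m, ∀ l < m, lab k = lab l → k = l) :=
  shortest_path_iff_distinct_labels_general n m π φ ψ lab h0 hlast hlab
end
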